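/- Let Ω ⊂ ℝⁿ be open, u : Ω → ℝ continuous and nonnegative, t > 0, and let ū_t(x) = sup_{B_t(x)} u denote the t-sup-convolution defined on Ω_t = {x ∈ Ω : dist(x, Ωᶜ) > t}. Then for every x₀ ∈ ∂{ū_t > 0} ∩ Ω_t there exists a point p with |p - x₀| = t such that u(p) = 0, u > 0 somewhere in every neighborhood of p intersected with B_t(x) for x near x₀, and the open ball B_t(p) satisfies B_t(p) ⊂ {ū_t > 0}; in particular the positivity set of ū_t has an interior tangent ball of radius t at every free boundary point of ū_t. -/

import Mathlib

open Metric

theorem stmt_19 (n : ℕ) (Ω : Set (EuclideanSpace ℝ (Fin n))) (hΩ : IsOpen Ω)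
    (u : EuclideanSpace ℝ (Fin n) → ℝ) (hu : Continuous u) (hnn : ∀ x, 0 ≤ u x)
    (t : ℝ) (ht : 0 < t) :
    ∀ x₀ ∈ frontier {x | 0 < sSup (u '' Metric.ball x t)} ∩
        {x ∈ Ω | t < Metric.infDist x Ωᶜ},
      ∃ p : EuclideanSpace ℝ (Fin n),
        dist p x₀ = t ∧ u p = 0 ∧ p ∈ closure {x | 0 < u x} ∧
        Metric.ball p t ⊆ {x | 0 < sSup (u '' Metric.ball x t)} := by
  intro x₀ hx₀
  set P : Set (EuclideanSpace ℝ (Fin n)) := {x | 0 < u x} with hP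
  -- The positivity set of the sup-convolution is the t-thickening of P
  have hSeq : {x | 0 < sSup (u '' Metric.ball x t)} = Metric.thickening t P := by
    ext x
    simp only [Set.mem_setOf_eq, Metric.mem_thickening_iff]
    constructor
    · intro h
      by_contra hc
      push_neg at hc
      have hz : ∀ y ∈ Metric.ball x t, u y ≤ 0 := by
        intro y hy
        by_contra hy'
        push_neg at hy'
        exact absurd (hc y hy') (not_le.mpr (by simpa [dist_comm] using hy))
      have : sSup (u '' Metric.ball x t) ≤ 0 := by
        apply Real.sSup_le _ le_rfl
        rintro v ⟨y, hy, rfl⟩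
        exact hz y hy
      linarith
    · rintro ⟨z, hz, hd⟩
      have hb : BddAbove (u '' Metric.ball x t) := by
        have : BddAbove (u '' Metric.closedBall x t) :=
          ((isCompact_closedBall x t).image hu).bddAbove
        exact this.mono (Set.image_mono Metric.ball_subset_closedBall)
      have : u z ≤ sSup (u '' Metric.ball x t) :=
        le_csSup hb ⟨z, by simpa [dist_comm] using hd, rfl⟩
      have hz' : 0 < u z := hz
      linarith
  rw [hSeq] at hx₀
  obtain ⟨hfr, -⟩ := hx₀
  have hPne : P.Nonempty := by
    by_contra h
    rw [Set.not_nonempty_iff_eq_empty] at h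
    rw [h, Metric.thickening_empty] at hfr
    simp at hfr
  -- x₀ is not in the (open) thickening, but in its closure
  have hnotin : x₀ ∉ Metric.thickening t P := by
    intro h
    have := Metric.isOpen_thickening (δ := t) (E := P)
    rw [this.frontier_eq] at hfr
    exact hfr.2 h
  have hcl : x₀ ∈ closure (Metric.thickening t P) := frontier_subset_closure hfr
  -- infDist x₀ P = t
  have h_le : Metric.infDist x₀ P ≤ t := by
    have hsub : closure (Metric.thickening t P) ⊆ {x | Metric.infDist x P ≤ t} := by
      apply closure_minimal
      · intro x hx
        exact ((Metric.mem_thickening_iff_infDist_lt hPne).1 hx).le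
      · exact isClosed_le (Metric.continuous_infDist_pt P) continuous_const
    exact hsub hcl
  have h_ge : ∀ z ∈ closure P, t ≤ dist x₀ z := by
    have hsub : closure P ⊆ {z | t ≤ dist x₀ z} := by
      apply closure_minimal
      · intro z hz
        by_contra h
        simp only [Set.mem_setOf_eq, not_le] at h
        exact hnotin (Metric.mem_thickening_iff.2 ⟨z, hz, h⟩)
      · exact isClosed_le continuous_const (continuous_const.dist continuous_id)
    exact fun z hz => hsub hz
  -- pick the closest point p in closure P
  obtain ⟨p, hpmem, hpd⟩ :=
    isClosed_closure.exists_infDist_eq_dist (hPne.closure) x₀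
  rw [Metric.infDist_closure] at hpd
  have hdist : dist x₀ p = t := le_antisymm (hpd ▸ h_le) (h_ge p hpmem)
  have hinf : Metric.infDist x₀ P = t := hpd.trans hdist
  -- u p = 0
  have hup : u p = 0 := by
    rcases eq_or_lt_of_le (hnn p) with h | h
    · exact h.symm
    · exfalso
      -- u > 0 near p; slide towards x₀ to contradict infDist = t
      obtain ⟨δ, hδ, hδ'⟩ := Metric.continuousAt_iff.1 hu.continuousAt (u p) h
      set ε : ℝ := min (δ / t) 1 / 2 with hε
      have hε0 : 0 < ε := by positivity
      have hε1 : ε < 1 := by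
        have : min (δ / t) 1 ≤ 1 := min_le_right _ _
        simp only [hε]; linarith
      have hεδ : ε * t < δ := by
        have h1 : ε < δ / t := by
          have : min (δ / t) 1 ≤ δ / t := min_le_left _ _
          have h2 : 0 < δ / t := by positivity
          simp only [hε]; linarith [min_le_left (δ / t) 1, lt_min_iff.2 ⟨h2, one_pos⟩]
        calc ε * t < (δ / t) * t := by nlinarith
          _ = δ := by field_simp
      set q : EuclideanSpace ℝ (Fin n) := x₀ + (1 - ε) • (p - x₀) with hq
      have hqp : dist q p = ε * t := by
        have : q - p = -(ε • (p - x₀)) := by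
          simp only [hq, sub_smul, one_smul]
          abel
        rw [dist_eq_norm, this, norm_neg, norm_smul, Real.norm_eq_abs,
          abs_of_pos hε0, ← dist_eq_norm]
        rw [dist_comm p x₀, hdist]
      have hqx : dist q x₀ = (1 - ε) * t := by
        have : q - x₀ = (1 - ε) • (p - x₀) := by simp [hq]
        rw [dist_eq_norm, this, norm_smul, Real.norm_eq_abs,
          abs_of_pos (by linarith : (0:ℝ) < 1 - ε), ← dist_eq_norm]
        rw [dist_comm p x₀, hdist]
      have huq : 0 < u q := by
        have : dist (u q) (u p) < u p := hδ' (by rw [hqp]; exact hεδ)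
        rw [Real.dist_eq] at this
        cases abs_lt.1 this with
        | intro h1 h2 => linarith
      have : Metric.infDist x₀ P ≤ dist x₀ q := Metric.infDist_le_dist_of_mem huq
      rw [hinf, dist_comm, hqx] at this
      nlinarith
  refine ⟨p, by rw [dist_comm]; exact hdist, hup, hpmem, ?_⟩
  intro x hx
  rw [hSeq]
  rw [Metric.mem_thickening_iff_infDist_lt hPne]
  calc Metric.infDist x P = Metric.infDist x (closure P) := (Metric.infDist_closure).symm
    _ ≤ dist x p := Metric.infDist_le_dist_of_mem hpmem
    _ < t := hx
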